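/- There is an absolute constant C such that for all s ∈ (0,1], all α > 0, all y ∈ ℝ and every continuous locally integrable g : ℝ → ℝ, the y-derivative of δ_α[L_s, g] exists and satisfies |α·∂_y δ_α[L_s, g](y)| ≤ C·s·( |g(y+α)| + |g(y)| + |g(y−α)| + (1/α)∫_{−α}^{α} |g(y+t)| dt ). -/

import Mathlib

/-!
By the fundamental theorem of calculus, `β · ∂_y ⨍_β h(y) = h(y) - h(y - β)` for continuous `h`
and `β = ±α`. Hence, by the product rule, `α · ∂_y δ_α[L_s, g](y)` is a sum of four products,
each pairing a difference or an average of `L_s` (bounded by `2s` resp. `s`, since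
`|L_s| ≤ s`) with an average of `g` (bounded by `(1/α) ∫ |g(y + t)|` over `[-α, 0]` or
`[0, α]`) resp. a difference of `g` (bounded by its point values). This gives `C = 2`.
-/

open MeasureTheory Real Set Filter

/-- Sliding average `⨍_α f(y) = (1/α) ∫_{y-α}^{y} f(z) dz`. -/
noncomputable def fint (α : ℝ) (f : ℝ → ℝ) (y : ℝ) : ℝ :=
  (1 / α) * ∫ z in (y - α)..y, f z

/-- Finite difference slope `Δ_α f(y) = (f(y) - f(y-α))/α`. -/
noncomputable def slopeOp (α : ℝ) (f : ℝ → ℝ) (y : ℝ) : ℝ :=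
  (f y - f (y - α)) / α

/-- The profile `L_s(y) = (2s/π) arctan((1+s²/3) y)`. -/
noncomputable def Ls (s y : ℝ) : ℝ := (2 * s / Real.pi) * Real.arctan ((1 + s ^ 2 / 3) * y)

/-- `δ_α[f,g](y) = ⨍_α f ⨍_α g - ⨍_{-α} f ⨍_{-α} g`. -/
noncomputable def deltaOp (α : ℝ) (f g : ℝ → ℝ) (y : ℝ) : ℝ :=
  fint α f y * fint α g y - fint (-α) f y * fint (-α) g y

/-- `J_α[f,g](y) = ⨍_α f ⨍_α g - 2 f g + ⨍_{-α} f ⨍_{-α} g`. -/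
noncomputable def Jop (α : ℝ) (f g : ℝ → ℝ) (y : ℝ) : ℝ :=
  fint α f y * fint α g y - 2 * f y * g y + fint (-α) f y * fint (-α) g y

/-- The `H¹` norm `(∫ g² + ∫ (g')²)^{1/2}`. -/
noncomputable def H1norm (g : ℝ → ℝ) : ℝ :=
  Real.sqrt ((∫ y : ℝ, g y ^ 2) + ∫ y : ℝ, deriv g y ^ 2)

lemma hasDerivAt_fint {f : ℝ → ℝ} (hf : Continuous f) (α y : ℝ) :
    HasDerivAt (fint α f) (slopeOp α f y) y := by
  have hprim : ∀ b, HasDerivAt (fun u => ∫ x in (0 : ℝ)..u, f x) (f b) b := fun b =>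
    intervalIntegral.integral_hasDerivAt_right (hf.intervalIntegrable _ _)
      (hf.stronglyMeasurableAtFilter _ _) hf.continuousAt
  have hfint : fint α f =
      fun z => (1 / α) * ((∫ x in (0 : ℝ)..z, f x) - ∫ x in (0 : ℝ)..z - α, f x) := by
    funext z
    rw [fint, intervalIntegral.integral_interval_sub_left (hf.intervalIntegrable _ _)
      (hf.intervalIntegrable _ _)]
  rw [hfint]
  refine (((hprim y).sub ((hprim (y - α)).comp_sub_const y α)).const_mul
    (1 / α)).congr_deriv ?_
  rw [slopeOp]; ring

lemma mul_slopeOp (α : ℝ) (f : ℝ → ℝ) (y : ℝ) : α * slopeOp α f y = f y - f (y - α) := by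
  rcases eq_or_ne α 0 with rfl | hα
  · simp [slopeOp]
  · rw [slopeOp, mul_div_cancel₀ _ hα]

lemma continuous_Ls (s : ℝ) : Continuous (Ls s) := by
  unfold Ls; fun_prop

lemma abs_Ls_le {s : ℝ} (hs : 0 ≤ s) (x : ℝ) : |Ls s x| ≤ s := by
  have harctan : |arctan ((1 + s ^ 2 / 3) * x)| ≤ π / 2 :=
    abs_le.2 ⟨(neg_pi_div_two_lt_arctan _).le, (arctan_lt_pi_div_two _).le⟩
  calc |Ls s x| = 2 * s / π * |arctan ((1 + s ^ 2 / 3) * x)| := by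
        rw [Ls, abs_mul, abs_of_nonneg (by positivity)]
    _ ≤ 2 * s / π * (π / 2) := by gcongr
    _ = s := by field_simp

lemma abs_fint_le {f : ℝ → ℝ} {C : ℝ} (hf : ∀ x, |f x| ≤ C) (α y : ℝ) : |fint α f y| ≤ C := by
  have hC : 0 ≤ C := (abs_nonneg _).trans (hf 0)
  have hint := intervalIntegral.norm_integral_le_of_norm_le_const (a := y - α) (b := y)
    fun x _ => (Real.norm_eq_abs _).trans_le (hf x)
  rw [Real.norm_eq_abs, sub_sub_cancel] at hint
  calc |fint α f y| = |α|⁻¹ * |∫ z in (y - α)..y, f z| := by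
        rw [fint, abs_mul, one_div, abs_inv]
    _ ≤ |α|⁻¹ * (C * |α|) := by gcongr
    _ = C * (|α|⁻¹ * |α|) := by ring
    _ ≤ C := mul_le_of_le_one_right hC (inv_mul_le_one_of_le₀ le_rfl (abs_nonneg _))

lemma abs_fint_le_integral_abs {α : ℝ} (hα : 0 < α) (g : ℝ → ℝ) (y : ℝ) :
    |fint α g y| ≤ (1 / α) * ∫ t in (-α)..0, |g (y + t)| := by
  have hshift : ∫ z in (y - α)..y, g z = ∫ t in (-α)..0, g (y + t) := by
    rw [intervalIntegral.integral_comp_add_left, add_zero, ← sub_eq_add_neg]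
  rw [fint, abs_mul, abs_of_pos (one_div_pos.2 hα), hshift]
  gcongr
  exact intervalIntegral.abs_integral_le_integral_abs (by linarith)

lemma abs_fint_neg_le_integral_abs {α : ℝ} (hα : 0 < α) (g : ℝ → ℝ) (y : ℝ) :
    |fint (-α) g y| ≤ (1 / α) * ∫ t in (0 : ℝ)..α, |g (y + t)| := by
  have hshift : ∫ z in (y - -α)..y, g z = -∫ t in (0 : ℝ)..α, g (y + t) := by
    rw [intervalIntegral.integral_comp_add_left, add_zero, sub_neg_eq_add,
      intervalIntegral.integral_symm]
  rw [fint, hshift, one_div_neg_eq_neg_one_div, neg_mul_neg, abs_mul,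
    abs_of_pos (one_div_pos.2 hα)]
  gcongr
  exact intervalIntegral.abs_integral_le_integral_abs hα.le

lemma abs_mul_deriv_fint_mul_fint_le {f : ℝ → ℝ} {s : ℝ} (hf : ∀ x, |f x| ≤ s)
    (g : ℝ → ℝ) (β y : ℝ) :
    |β * (slopeOp β f y * fint β g y + fint β f y * slopeOp β g y)|
      ≤ 2 * s * |fint β g y| + s * (|g y| + |g (y - β)|) := by
  have hslope_f : |β * slopeOp β f y| ≤ 2 * s := by
    rw [mul_slopeOp]
    linarith [abs_sub (f y) (f (y - β)), hf y, hf (y - β)]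
  have hslope_g : |β * slopeOp β g y| ≤ |g y| + |g (y - β)| := by
    rw [mul_slopeOp]; exact abs_sub _ _
  have hfint_f := abs_fint_le hf β y
  have hs : 0 ≤ s := (abs_nonneg _).trans hfint_f
  calc _ = |(β * slopeOp β f y) * fint β g y + fint β f y * (β * slopeOp β g y)| := by ring_nf
    _ ≤ |β * slopeOp β f y| * |fint β g y| + |fint β f y| * |β * slopeOp β g y| := by
        rw [← abs_mul, ← abs_mul]; exact abs_add_le _ _
    _ ≤ 2 * s * |fint β g y| + s * (|g y| + |g (y - β)|) := by gcongr

/-- A `y`-derivative on `δ_α[L_s, g]` costs a power of `α⁻¹`. -/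
theorem deltaOp_deriv_bound :
    ∃ C : ℝ, 0 < C ∧ ∀ s : ℝ, 0 < s → s ≤ 1 → ∀ α : ℝ, 0 < α →
      ∀ g : ℝ → ℝ, Continuous g → LocallyIntegrable g → ∀ y : ℝ,
        ∃ d : ℝ, HasDerivAt (fun z => deltaOp α (Ls s) g z) d y ∧
          |α * d| ≤ C * s * (|g (y + α)| + |g y| + |g (y - α)|
            + (1 / α) * ∫ t in (-α)..α, |g (y + t)|) := by
  refine ⟨2, two_pos, fun s hs _ α hα g hg _ y => ?_⟩
  have hLs := abs_Ls_le hs.le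
  refine ⟨_, ((hasDerivAt_fint (continuous_Ls s) α y).mul (hasDerivAt_fint hg α y)).sub
    ((hasDerivAt_fint (continuous_Ls s) (-α) y).mul (hasDerivAt_fint hg (-α) y)), ?_⟩
  have hleft := abs_mul_deriv_fint_mul_fint_le hLs g α y
  have hright := abs_mul_deriv_fint_mul_fint_le hLs g (-α) y
  rw [sub_neg_eq_add] at hright
  have hcont : Continuous fun t => |g (y + t)| := by fun_prop
  have hsplit : ∫ t in (-α)..α, |g (y + t)|
      = (∫ t in (-α)..0, |g (y + t)|) + ∫ t in (0 : ℝ)..α, |g (y + t)| :=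
    (intervalIntegral.integral_add_adjacent_intervals (hcont.intervalIntegrable _ _)
      (hcont.intervalIntegrable _ _)).symm
  have hgα : 2 * s * |fint α g y| ≤ 2 * s * ((1 / α) * ∫ t in (-α)..0, |g (y + t)|) := by
    gcongr; exact abs_fint_le_integral_abs hα g y
  have hg_neg_α :
      2 * s * |fint (-α) g y| ≤ 2 * s * ((1 / α) * ∫ t in (0 : ℝ)..α, |g (y + t)|) := by
    gcongr; exact abs_fint_neg_le_integral_abs hα g y
  calc _ ≤ |α * (slopeOp α (Ls s) y * fint α g y + fint α (Ls s) y * slopeOp α g y)|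
        + |-α * (slopeOp (-α) (Ls s) y * fint (-α) g y
            + fint (-α) (Ls s) y * slopeOp (-α) g y)| := by
        rw [neg_mul, abs_neg, mul_sub]; exact abs_sub _ _
    _ ≤ _ := by
        rw [hsplit, mul_add (1 / α)]
        linarith [mul_nonneg hs.le (abs_nonneg (g y)),
          mul_nonneg hs.le (abs_nonneg (g (y + α))), mul_nonneg hs.le (abs_nonneg (g (y - α)))]
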